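/- Let U° be a d_B² × d_A² complex matrix with ‖U°‖₂² = d_A d_B and d_B ≥ d_A. Then ‖Tr_B|U°†|‖₂² ≥ ‖U°‖₁²/d_B, i.e., the 'pretty good' hacking fidelity p_PG := ‖Tr_B|U°†|‖₂²/d_A³ satisfies p_PG ≥ p_ME := ‖U°‖₁²/(d_A³ d_B). -/

import Mathlib

open scoped BigOperators ComplexOrder Matrix

noncomputable def Matrix.PosSemidef.sqrt {n 𝕜 : Type*} [Fintype n] [RCLike 𝕜] [DecidableEq n]
    {A : Matrix n n 𝕜} (hA : A.PosSemidef) : Matrix n n 𝕜 :=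
  hA.1.eigenvectorUnitary.1 * Matrix.diagonal ((↑) ∘ (Real.sqrt ·) ∘ hA.1.eigenvalues) *
    (star hA.1.eigenvectorUnitary : Matrix n n 𝕜)

-- Hilbert–Schmidt (Frobenius) norm: `hsNorm A = √(Tr(AᴴA))`.
noncomputable def hsNorm {m n : Type*} [Fintype m] [Fintype n] (A : Matrix m n ℂ) : ℝ :=
  Real.sqrt ((Aᴴ * A).trace).re

-- Trace (Schatten-1) norm: `traceNorm A = Tr √(AᴴA)`.
noncomputable def traceNorm {m n : Type*} [Fintype m] [Fintype n] [DecidableEq n]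
    (A : Matrix m n ℂ) : ℝ :=
  ((Matrix.posSemidef_conjTranspose_mul_self A).sqrt.trace).re

-- Partial trace over the second tensor factor.
noncomputable def ptrace₂ {a b : Type*} [Fintype a] [Fintype b]
    (X : Matrix (a × b) (a × b) ℂ) : Matrix a a ℂ :=
  Matrix.of fun i j => ∑ k : b, X (i, k) (j, k)

-- Partial trace over the first tensor factor.
noncomputable def ptrace₁ {a b : Type*} [Fintype a] [Fintype b]
    (X : Matrix (a × b) (a × b) ℂ) : Matrix b b ℂ :=
  Matrix.of fun i j => ∑ k : a, X (k, i) (k, j)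

/-!
The partial trace preserves the trace, so `‖U°‖₁ = Tr √(U°ᴴU°) = Tr √(U°U°ᴴ) = Tr Q` with
`Q = Tr_B |U°†|`, and Cauchy–Schwarz against the identity gives `(Re Tr Q)² ≤ d_B ‖Q‖₂²` for any
`d_B × d_B` matrix `Q`. The middle equality holds because on the finite spectra of `U°ᴴU°` and
`U°U°ᴴ` the square root agrees with a polynomial vanishing at `0`, and `Tr (AB)ᵏ = Tr (BA)ᵏ` for
`k ≥ 1` even for rectangular `A`, `B`.
-/

namespace Matrix

open Polynomial

variable {m n : Type*} [Fintype m] [Fintype n]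

lemma mul_mul_pow_comm {R : Type*} [Semiring R] [DecidableEq m] [DecidableEq n]
    (A : Matrix m n R) (B : Matrix n m R) (k : ℕ) : A * (B * A) ^ k = (A * B) ^ k * A := by
  induction k with
  | zero => simp
  | succ k ih => rw [pow_succ, pow_succ, ← Matrix.mul_assoc, ih, Matrix.mul_assoc,
      Matrix.mul_assoc, Matrix.mul_assoc]

lemma trace_pow_succ_mul_comm {R : Type*} [CommSemiring R] [DecidableEq m] [DecidableEq n]
    (A : Matrix m n R) (B : Matrix n m R) (k : ℕ) :
    trace ((A * B) ^ (k + 1)) = trace ((B * A) ^ (k + 1)) := by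
  rw [pow_succ, ← Matrix.mul_assoc, ← mul_mul_pow_comm, Matrix.mul_assoc, trace_mul_comm,
    Matrix.mul_assoc, ← pow_succ]

lemma trace_aeval_mul_comm {R S : Type*} [CommSemiring R] [CommSemiring S] [Algebra R S]
    [DecidableEq m] [DecidableEq n] {p : R[X]} (hp : p.coeff 0 = 0)
    (A : Matrix m n S) (B : Matrix n m S) :
    trace (aeval (A * B) p) = trace (aeval (B * A) p) := by
  simp only [aeval_eq_sum_range, trace_sum, trace_smul]
  refine Finset.sum_congr rfl fun k _ => ?_
  cases k with
  | zero => simp [hp]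
  | succ k => rw [trace_pow_succ_mul_comm]

lemma trace_cfc_conjTranspose_mul_self {𝕜 : Type*} [RCLike 𝕜] [DecidableEq m] [DecidableEq n]
    {f : ℝ → ℝ} (hf : f 0 = 0) (A : Matrix m n 𝕜) :
    trace (cfc f (Aᴴ * A)) = trace (cfc f (A * Aᴴ)) := by
  set s := (insert 0 (spectrum ℝ (Aᴴ * A) ∪ spectrum ℝ (A * Aᴴ))).toFinite.toFinset
  set p := Lagrange.interpolate s id f
  have hp : ∀ x ∈ s, p.eval x = f x := fun x hx =>
    Lagrange.eval_interpolate_at_node f (Set.injOn_id _) hx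
  have h₁ : cfc f (Aᴴ * A) = aeval (Aᴴ * A) p := by
    rw [← cfc_polynomial p _ (isHermitian_conjTranspose_mul_self A).isSelfAdjoint]
    exact cfc_congr fun x hx => (hp x (by simp [s, hx])).symm
  have h₂ : cfc f (A * Aᴴ) = aeval (A * Aᴴ) p := by
    rw [← cfc_polynomial p _ (isHermitian_mul_conjTranspose_self A).isSelfAdjoint]
    exact cfc_congr fun x hx => (hp x (by simp [s, hx])).symm
  rw [h₁, h₂, trace_aeval_mul_comm]
  rw [coeff_zero_eq_eval_zero, hp 0 (by simp [s]), hf]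

lemma PosSemidef.sqrt_eq_cfc {𝕜 : Type*} [RCLike 𝕜] [DecidableEq n] {A : Matrix n n 𝕜}
    (hA : A.PosSemidef) : hA.sqrt = cfc Real.sqrt A := by
  rw [hA.1.cfc_eq, IsHermitian.cfc, Unitary.conjStarAlgAut_apply]
  rfl

end Matrix

section

variable {m n : Type*} [Fintype m] [Fintype n]

lemma hsNorm_sq_eq_sum_normSq (A : Matrix m n ℂ) :
    hsNorm A ^ 2 = ∑ i, ∑ j, Complex.normSq (A i j) := by
  have h : ((Aᴴ * A).trace).re = ∑ i, ∑ j, Complex.normSq (A i j) := by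
    simp only [Matrix.trace, Matrix.diag, Matrix.mul_apply, Matrix.conjTranspose_apply,
      Complex.re_sum, Finset.sum_comm (γ := n)]
    simp [Complex.normSq_apply, Complex.mul_re]
  rw [hsNorm, h]
  exact Real.sq_sqrt <| Finset.sum_nonneg fun i _ => Finset.sum_nonneg fun j _ =>
    Complex.normSq_nonneg _

lemma sq_re_trace_le_card_mul_hsNorm_sq (Q : Matrix n n ℂ) :
    Q.trace.re ^ 2 ≤ Fintype.card n * hsNorm Q ^ 2 := by
  have hdiag : ∀ i, (Q i i).re ^ 2 ≤ ∑ j, Complex.normSq (Q i j) := fun i =>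
    calc (Q i i).re ^ 2 ≤ Complex.normSq (Q i i) := by rw [sq]; exact Complex.re_sq_le_normSq _
      _ ≤ ∑ j, Complex.normSq (Q i j) :=
        Finset.single_le_sum (fun j _ => Complex.normSq_nonneg _) (Finset.mem_univ i)
  calc Q.trace.re ^ 2 = (∑ i, (Q i i).re) ^ 2 := by simp [Matrix.trace, Complex.re_sum]
    _ ≤ Fintype.card n * ∑ i, (Q i i).re ^ 2 := sq_sum_le_card_mul_sum_sq
    _ ≤ Fintype.card n * hsNorm Q ^ 2 := by
      rw [hsNorm_sq_eq_sum_normSq]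
      gcongr with i
      exact hdiag i

lemma trace_ptrace₁ (X : Matrix (m × n) (m × n) ℂ) : (ptrace₁ X).trace = X.trace := by
  simp only [Matrix.trace, Matrix.diag, ptrace₁, Matrix.of_apply, Fintype.sum_prod_type]
  exact Finset.sum_comm

lemma traceNorm_eq_re_trace_sqrt_mul_conjTranspose [DecidableEq m] [DecidableEq n]
    (A : Matrix m n ℂ) :
    traceNorm A = (Matrix.posSemidef_conjTranspose_mul_self Aᴴ).sqrt.trace.re := by
  rw [traceNorm, Matrix.PosSemidef.sqrt_eq_cfc, Matrix.PosSemidef.sqrt_eq_cfc,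
    Matrix.conjTranspose_conjTranspose,
    Matrix.trace_cfc_conjTranspose_mul_self Real.sqrt_zero]

end

theorem stmt_10_general (dA dB : ℕ)
    (W : Matrix (Fin dB × Fin dB) (Fin dA × Fin dA) ℂ) :
    hsNorm (ptrace₁ ((Matrix.posSemidef_conjTranspose_mul_self Wᴴ).sqrt)) ^ 2
      ≥ traceNorm W ^ 2 / dB ∧
    hsNorm (ptrace₁ ((Matrix.posSemidef_conjTranspose_mul_self Wᴴ).sqrt)) ^ 2 / (dA : ℝ) ^ 3
      ≥ traceNorm W ^ 2 / ((dA : ℝ) ^ 3 * dB) := by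
  set Q := ptrace₁ ((Matrix.posSemidef_conjTranspose_mul_self Wᴴ).sqrt)
  have hQ : traceNorm W = Q.trace.re := by
    rw [trace_ptrace₁, traceNorm_eq_re_trace_sqrt_mul_conjTranspose]
  have key : traceNorm W ^ 2 / dB ≤ hsNorm Q ^ 2 := by
    refine div_le_of_le_mul₀ (Nat.cast_nonneg _) (sq_nonneg _) ?_
    simpa [hQ, mul_comm] using sq_re_trace_le_card_mul_hsNorm_sq Q
  refine ⟨key, ?_⟩
  rw [ge_iff_le, mul_comm, ← div_div]
  gcongr

theorem stmt_10 (dA dB : ℕ) (hAB : dA ≤ dB)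
    (W : Matrix (Fin dB × Fin dB) (Fin dA × Fin dA) ℂ)
    (hW : hsNorm W ^ 2 = (dA : ℝ) * dB) :
    hsNorm (ptrace₁ ((Matrix.posSemidef_conjTranspose_mul_self Wᴴ).sqrt)) ^ 2
      ≥ traceNorm W ^ 2 / dB ∧
    hsNorm (ptrace₁ ((Matrix.posSemidef_conjTranspose_mul_self Wᴴ).sqrt)) ^ 2 / (dA : ℝ) ^ 3
      ≥ traceNorm W ^ 2 / ((dA : ℝ) ^ 3 * dB) :=
  stmt_10_general dA dB W
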